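/- Fix a positive integer n and nonnegative integers d_1,…,d_n with D = ∑ d_i. The function A ↦ ∑_{a_1+⋯+a_n=A, a_i≥0} a_1^{\underline{d_1}}⋯a_n^{\underline{d_n}} is a polynomial in A of degree D+n-1 (i.e. it agrees with a polynomial of degree exactly D+n-1 for all nonnegative integers A). -/

import Mathlib

open Finset

/-- Hockey-stick identity as a range sum. -/
lemma hockey_aux (a A : ℕ) : ∑ i ∈ range (A + 1), i.choose a = (A + 1).choose (a + 1) := by
  rw [range_eq_Ico, Finset.Ico_add_one_right_eq_Icc, ← Nat.sum_Icc_choose A a]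
  symm
  apply Finset.sum_subset
  · intro m hm
    rw [mem_Icc] at hm ⊢
    omega
  · intro m hm hm2
    rw [mem_Icc] at hm hm2
    exact Nat.choose_eq_zero_of_lt (by omega)

/-- Dual Vandermonde: `∑_{i+j=A} C(i,a) C(j,b) = C(A+1, a+b+1)`. -/
lemma vdm_aux (b a : ℕ) : ∀ A : ℕ,
    ∑ i ∈ range (A + 1), i.choose a * (A - i).choose b = (A + 1).choose (a + b + 1) := by
  induction b with
  | zero =>
    intro A
    simp only [Nat.choose_zero_right, mul_one, Nat.add_zero]
    exact hockey_aux a A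
  | succ b ih =>
    intro A
    induction A with
    | zero =>
      simp [Nat.choose_eq_zero_of_lt (show 1 < a + (b + 1) + 1 by omega)]
    | succ A ihA =>
      rw [Finset.sum_range_succ]
      have hsplit : ∀ i ∈ range (A + 1), i.choose a * (A + 1 - i).choose (b + 1)
          = i.choose a * (A - i).choose b + i.choose a * (A - i).choose (b + 1) := by
        intro i hi
        rw [mem_range] at hi
        rw [show A + 1 - i = (A - i) + 1 by omega, Nat.choose_succ_succ, Nat.mul_add]
      rw [Finset.sum_congr rfl hsplit, Finset.sum_add_distrib, ih A, ihA, Nat.sub_self,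
        Nat.choose_zero_succ, Nat.mul_zero, Nat.add_zero,
        show a + (b + 1) + 1 = (a + b + 1) + 1 by ring, Nat.choose_succ_succ (A + 1)]

/-- Shifted dual Vandermonde. -/
lemma gvdm_aux (n : ℕ) : ∀ a b A : ℕ,
    ∑ i ∈ range (A + 1), i.choose a * (A - i + n).choose (b + n)
      = (A + n + 1).choose (a + b + n + 1) := by
  induction n with
  | zero =>
    intro a b A
    simpa using vdm_aux b a A
  | succ n ih =>
    intro a b A
    have h := ih a (b + 1) (A + 1)
    rw [Finset.sum_range_succ, Nat.sub_self, Nat.zero_add,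
      Nat.choose_eq_zero_of_lt (show n < b + 1 + n by omega), Nat.mul_zero, Nat.add_zero] at h
    have e1 : ∀ i ∈ range (A + 1),
        i.choose a * (A - i + (n + 1)).choose (b + (n + 1))
          = i.choose a * (A + 1 - i + n).choose (b + 1 + n) := by
      intro i hi
      rw [mem_range] at hi
      congr 2 <;> omega
    rw [Finset.sum_congr rfl e1, h]
    congr 1 <;> omega

/-- Decompose a sum over `antidiagonalTuple (n+1)` via `Fin.cons`. -/
lemma sum_antidiagonalTuple_succ {M : Type*} [AddCommMonoid M] (n A : ℕ)
    (f : (Fin (n + 1) → ℕ) → M) :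
    ∑ a ∈ Finset.Nat.antidiagonalTuple (n + 1) A, f a
      = ∑ ij ∈ Finset.HasAntidiagonal.antidiagonal A,
          ∑ b ∈ Finset.Nat.antidiagonalTuple n ij.2, f (Fin.cons ij.1 b) := by
  refine Eq.trans ?_ (Finset.sum_sigma (Finset.HasAntidiagonal.antidiagonal A)
    (fun ij => Finset.Nat.antidiagonalTuple n ij.2) (fun x => f (Fin.cons x.1.1 x.2)))
  apply Finset.sum_nbij' (i := fun a => (⟨(a 0, ∑ i, Fin.tail a i), Fin.tail a⟩ :
      Σ ij : ℕ × ℕ, Fin n → ℕ))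
    (j := fun x => Fin.cons x.1.1 x.2)
  · intro a ha
    rw [Finset.Nat.mem_antidiagonalTuple, Fin.sum_univ_succ] at ha
    simp only [Finset.mem_sigma, Finset.HasAntidiagonal.mem_antidiagonal, Finset.Nat.mem_antidiagonalTuple]
    exact ⟨ha, trivial⟩
  · intro x hx
    simp only [Finset.mem_sigma, Finset.HasAntidiagonal.mem_antidiagonal,
      Finset.Nat.mem_antidiagonalTuple] at hx
    rw [Finset.Nat.mem_antidiagonalTuple, Fin.sum_univ_succ]
    simp only [Fin.cons_zero, Fin.cons_succ]
    rw [hx.2]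
    exact hx.1
  · intro a _
    exact Fin.cons_self_tail a
  · intro x hx
    simp only [Finset.mem_sigma, Finset.HasAntidiagonal.mem_antidiagonal,
      Finset.Nat.mem_antidiagonalTuple] at hx
    refine Sigma.ext ?_ ?_
    · simp [Fin.tail_cons, Fin.cons_zero, hx.2]
    · simp [Fin.tail_cons]
  · intro a _
    rw [Fin.cons_self_tail]

/-- Key combinatorial identity. -/
lemma key_aux (m : ℕ) : ∀ (d : Fin (m + 1) → ℕ) (A : ℕ),
    ∑ a ∈ Finset.Nat.antidiagonalTuple (m + 1) A, ∏ i, (a i).choose (d i)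
      = (A + m).choose ((∑ i, d i) + m) := by
  induction m with
  | zero =>
    intro d A
    simp [Fin.prod_univ_one, Fin.sum_univ_one]
  | succ m ih =>
    intro d A
    rw [sum_antidiagonalTuple_succ]
    have hstep : ∀ ij ∈ Finset.HasAntidiagonal.antidiagonal A,
        (∑ b ∈ Finset.Nat.antidiagonalTuple (m + 1) ij.2,
          ∏ i, ((Fin.cons ij.1 b : Fin (m + 2) → ℕ) i).choose (d i))
        = ij.1.choose (d 0) * (ij.2 + m).choose ((∑ i : Fin (m+1), d i.succ) + m) := by
      intro ij _
      rw [← ih (fun i => d i.succ) ij.2, Finset.mul_sum]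
      apply Finset.sum_congr rfl
      intro b _
      rw [Fin.prod_univ_succ]
      simp [Fin.cons_zero, Fin.cons_succ]
    rw [Finset.sum_congr rfl hstep, Finset.Nat.sum_antidiagonal_eq_sum_range_succ_mk,
      gvdm_aux m (d 0) ((∑ i : Fin (m+1), d i.succ)) A]
    have hs : (∑ i, d i) = d 0 + ∑ i : Fin (m+1), d i.succ := Fin.sum_univ_succ d
    rw [hs]
    congr 1

/-- For `n ≥ 1` and nonnegative integers `d_1,…,d_n` with `D = ∑ d_i`, the function
`A ↦ ∑_{a_1+⋯+a_n=A, a_i≥0} a_1^{\underline{d_1}}⋯a_n^{\underline{d_n}}` agrees with a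
polynomial in `A` of degree exactly `D + n - 1`. -/
theorem ehrhart_sum_is_polynomial (n : ℕ) (hn : 0 < n) (d : Fin n → ℕ) :
    ∃ p : Polynomial ℚ, p.natDegree = (∑ i, d i) + n - 1 ∧
      ∀ A : ℕ, p.eval (A : ℚ) =
        ∑ a ∈ Finset.Nat.antidiagonalTuple n A, ∏ i, ((a i).descFactorial (d i) : ℚ) := by
  obtain ⟨m, rfl⟩ : ∃ m, n = m + 1 := ⟨n - 1, by omega⟩
  set D : ℕ := ∑ i, d i with hD
  set c : ℚ := (∏ i, (Nat.factorial (d i) : ℚ)) / (Nat.factorial (D + m) : ℚ) with hc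
  have hcne : c ≠ 0 := by
    apply div_ne_zero
    · apply Finset.prod_ne_zero_iff.mpr
      intro i _
      exact_mod_cast Nat.factorial_ne_zero (d i)
    · exact_mod_cast Nat.factorial_ne_zero (D + m)
  refine ⟨Polynomial.C c * (descPochhammer ℚ (D + m)).comp (Polynomial.X + Polynomial.C (m : ℚ)),
    ?_, ?_⟩
  · rw [Polynomial.natDegree_C_mul hcne, Polynomial.natDegree_comp,
      descPochhammer_natDegree, Polynomial.natDegree_X_add_C, mul_one]
    omega
  · intro A
    rw [Polynomial.eval_mul, Polynomial.eval_C, Polynomial.eval_comp, Polynomial.eval_add,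
      Polynomial.eval_X, Polynomial.eval_C]
    have h1 : (((A : ℕ) : ℚ) + (m : ℚ)) = ((A + m : ℕ) : ℚ) := by push_cast; ring
    rw [h1, descPochhammer_eval_eq_descFactorial]
    have h2 : (A + m).descFactorial (D + m) = Nat.factorial (D + m) * (A + m).choose (D + m) :=
      Nat.descFactorial_eq_factorial_mul_choose _ _
    have h3 : ∀ a ∈ Finset.Nat.antidiagonalTuple (m + 1) A,
        (∏ i, ((a i).descFactorial (d i) : ℚ))
          = (∏ i, (Nat.factorial (d i) : ℚ)) * ∏ i, ((a i).choose (d i) : ℚ) := by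
      intro a _
      rw [← Finset.prod_mul_distrib]
      apply Finset.prod_congr rfl
      intro i _
      rw [Nat.descFactorial_eq_factorial_mul_choose]
      push_cast
      ring
    rw [Finset.sum_congr rfl h3, ← Finset.mul_sum]
    have h4 : (∑ a ∈ Finset.Nat.antidiagonalTuple (m + 1) A, ∏ i, ((a i).choose (d i) : ℚ))
        = (((A + m).choose (D + m) : ℕ) : ℚ) := by
      rw [← key_aux m d A]
      push_cast
      rfl
    rw [h4, h2, hc]
    push_cast
    field_simp
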